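/- arXiv:2209.01597 — 2 statements merged into one kernel-verified Lean document; each statement's English description precedes it below -/
import Mathlib

section
/- Let ℓ∘h and M be such that F(p) := ℓ(h(p)) − Mp is L-Lipschitz on ℝ². Suppose a finite training set 𝒯 = {(p_d, θ_d)} with θ_d = h(p_d) is given, and define S = ⋃_{(p_d,θ_d)∈𝒯} { p ∈ ℝ² : |p − p_d| ≤ r and |ℓ(θ_d) − M p_d| + L·|p − p_d| ≤ ε }. Then for every p ∈ S, the perception error satisfies |ℓ(h(p)) − M p| ≤ ε. -/
open EuclideanSpace Metric

theorem norm_le_norm_add_mul_norm_sub {E F : Type*} [SeminormedAddCommGroup E]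
    [SeminormedAddCommGroup F] {f : E → F} {L : ℝ}
    (hf : ∀ x y, ‖f x - f y‖ ≤ L * ‖x - y‖) (x y : E) :
    ‖f x‖ ≤ ‖f y‖ + L * ‖x - y‖ :=
  (norm_le_norm_add_norm_sub' (f x) (f y)).trans (add_le_add_right (hf x y) _)

theorem stmt0_general {Θ : Type*} (h : EuclideanSpace ℝ (Fin 2) → Θ)
    (ℓ : Θ → EuclideanSpace ℝ (Fin 2))
    (M : EuclideanSpace ℝ (Fin 2) →ₗ[ℝ] EuclideanSpace ℝ (Fin 2))
    (L ε r : ℝ)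
    (hLip : ∀ p p' : EuclideanSpace ℝ (Fin 2),
      ‖(ℓ (h p) - M p) - (ℓ (h p') - M p')‖ ≤ L * ‖p - p'‖)
    (T : Finset ((EuclideanSpace ℝ (Fin 2)) × Θ))
    (hT : ∀ d ∈ T, d.2 = h d.1)
    (S : Set (EuclideanSpace ℝ (Fin 2)))
    (hS : S = ⋃ d ∈ T, {p : EuclideanSpace ℝ (Fin 2) |
      ‖p - d.1‖ ≤ r ∧ ‖ℓ d.2 - M d.1‖ + L * ‖p - d.1‖ ≤ ε}) :
    ∀ p ∈ S, ‖ℓ (h p) - M p‖ ≤ ε := by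
  intro p hp
  subst hS
  simp only [Set.mem_iUnion, Set.mem_ofPred_eq] at hp
  obtain ⟨d, hd, -, hbound⟩ := hp
  rw [hT d hd] at hbound
  calc ‖ℓ (h p) - M p‖ ≤ ‖ℓ (h d.1) - M d.1‖ + L * ‖p - d.1‖ :=
        norm_le_norm_add_mul_norm_sub (f := fun q => ℓ (h q) - M q) hLip p d.1
    _ ≤ ε := hbound

/-- If `F p := ℓ(h p) - M p` is `L`-Lipschitz, and the training set
`T` (with `θ_d = h p_d`) defines the set `S`, then the perception error on `S`
is bounded by `ε`. -/
theorem stmt0 {Θ : Type*} (h : EuclideanSpace ℝ (Fin 2) → Θ)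
    (ℓ : Θ → EuclideanSpace ℝ (Fin 2))
    (M : EuclideanSpace ℝ (Fin 2) →ₗ[ℝ] EuclideanSpace ℝ (Fin 2))
    (L ε r : ℝ) (hL : 0 < L) (hε : 0 < ε) (hr : 0 < r)
    (hLip : ∀ p p' : EuclideanSpace ℝ (Fin 2),
      ‖(ℓ (h p) - M p) - (ℓ (h p') - M p')‖ ≤ L * ‖p - p'‖)
    (T : Finset ((EuclideanSpace ℝ (Fin 2)) × Θ))
    (hT : ∀ d ∈ T, d.2 = h d.1)
    (S : Set (EuclideanSpace ℝ (Fin 2)))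
    (hS : S = ⋃ d ∈ T, {p : EuclideanSpace ℝ (Fin 2) |
      ‖p - d.1‖ ≤ r ∧ ‖ℓ d.2 - M d.1‖ + L * ‖p - d.1‖ ≤ ε}) :
    ∀ p ∈ S, ‖ℓ (h p) - M p‖ ≤ ε :=
  stmt0_general h ℓ M L ε r hLip T hT S hS
end

section
/- Let V₁, V₂ : X → ℝ≥0, χ > 1, 0 < λ < χ − 1, and C_q, D_q as above. Suppose p ∈ X satisfies V_{3−q}(p) > 0 and (χ−λ) V_{3−q}(p) ≤ V_q(p) ≤ χ V_{3−q}(p). Then p ∈ C_q ∩ D_q, and moreover after the jump q⁺ = 3 − q the state lies strictly in the interior of the flow condition: V_{q⁺}(p) < χ V_{3−q⁺}(p) and V_{q⁺}(p) < (χ−λ) V_{3−q⁺}(p) (so p ∉ D_{q⁺}), i.e., two consecutive jumps at the same point p are impossible (no Zeno chattering at a fixed state). -/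
/-- from a point of `C_q ∩ D_q`, after a jump the state is strictly
inside the flow condition and outside the jump set: no consecutive jumps. -/
theorem stmt9 {X : Type*} (V : ℕ → X → ℝ) (χ lam : ℝ)
    (hχ : 1 < χ) (hlam0 : 0 < lam) (hlam : lam < χ - 1)
    (C D : ℕ → Set X)
    (hC : ∀ q, C q = {p | V q p ≤ χ * V (3 - q) p})
    (hD : ∀ q, D q = {p | V q p ≥ (χ - lam) * V (3 - q) p})
    (p : X) (q : ℕ) (hq : q ∈ ({1, 2} : Set ℕ))
    (hpos : 0 < V (3 - q) p)
    (hlow : (χ - lam) * V (3 - q) p ≤ V q p)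
    (hhigh : V q p ≤ χ * V (3 - q) p) :
    p ∈ C q ∩ D q ∧
    V (3 - q) p < χ * V q p ∧
    V (3 - q) p < (χ - lam) * V q p ∧
    p ∉ D (3 - q) := by
  have hqq : 3 - (3 - q) = q := by
    rcases hq with h | h <;> subst h <;> rfl
  have h1 : (1 : ℝ) < χ - lam := by linarith
  have key : V (3 - q) p < (χ - lam) * V q p := by
    have : V (3 - q) p < (χ - lam) * ((χ - lam) * V (3 - q) p) := by
      nlinarith [mul_pos hpos (show (0:ℝ) < (χ - lam - 1) * (χ - lam + 1) by nlinarith)]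
    nlinarith
  refine ⟨⟨by rw [hC]; exact hhigh, by rw [hD]; exact hlow⟩, by nlinarith, key, ?_⟩
  rw [hD]
  simp only [Set.mem_setOf_eq, hqq]
  push_neg
  exact key
end
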